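/- arXiv:2007.00209 — 3 statements merged into one kernel-verified Lean document; each statement's English description precedes it below -/
import Mathlib

section
/- Let μ : Σ → X be a countably additive vector measure on a σ-algebra Σ with values in a Banach space X. Then μ is countably additive if and only if the scalar measure x'μ : A ↦ x'(μ(A)) is countably additive for every x' in the topological dual X'. -/
/-!
If `∑ μ (f n)` were not summable, Cauchy's criterion would give pairwise disjoint finite blocks
of indices whose sums `ν r = μ (B r)` (`B r` the union of the sets in the `r`-th block) stay
`ε` away from `0`, while every subseries `∑_{i ∈ M} ν i` still converges weakly, to
`μ (⋃ i ∈ M, B i)`. These weak limits lie in the separable closed span `Y` of the `ν r`.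
Take norming functionals `x' r` for the `ν r`; by sequential Banach–Alaoglu on `Y`, a
subsequence `x' (φ j)` converges pointwise on `Y`. The matrix `a j i = x' (φ j) (ν i)` then has
every subseries of its rows Cauchy in `j`, so by the gliding hump (Hahn–Schur) its rows are
Cauchy in `ℓ¹`. This contradicts `a j (φ j) = ‖ν (φ j)‖ ≥ ε` while `a N (φ j) → 0` as `j → ∞`.
Once the series converges, its sum is `μ (⋃ n, f n)` because functionals separate points.
-/

open Filter Topology Set

theorem exists_subset_sum_abs_le_two_mul_abs_sum {ι : Type*} (s : Finset ι) (g : ι → ℝ) :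
    ∃ t ⊆ s, ∑ i ∈ s, |g i| ≤ 2 * |∑ i ∈ t, g i| := by
  classical
  set P := s.filter (fun i => 0 ≤ g i)
  set N := s.filter (fun i => ¬ 0 ≤ g i)
  have hP : 0 ≤ ∑ i ∈ P, g i := Finset.sum_nonneg fun i hi => (Finset.mem_filter.mp hi).2
  have hN : ∑ i ∈ N, g i ≤ 0 :=
    Finset.sum_nonpos fun i hi => (not_le.mp (Finset.mem_filter.mp hi).2).le
  have hsplit : ∑ i ∈ s, |g i| = ∑ i ∈ P, g i - ∑ i ∈ N, g i := by
    rw [← Finset.sum_filter_add_sum_filter_not s (fun i => 0 ≤ g i), sub_eq_add_neg,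
      ← Finset.sum_neg_distrib]
    congr 1 <;> refine Finset.sum_congr rfl fun i hi => ?_
    · exact abs_of_nonneg (Finset.mem_filter.mp hi).2
    · exact abs_of_neg (not_le.mp (Finset.mem_filter.mp hi).2)
  rcases le_total (-∑ i ∈ N, g i) (∑ i ∈ P, g i) with h | h
  · exact ⟨P, Finset.filter_subset _ s, by rw [abs_of_nonneg hP]; linarith⟩
  · exact ⟨N, Finset.filter_subset _ s, by rw [abs_of_nonpos hN]; linarith⟩

theorem tsum_indicator_compl_abs_eq {ι : Type*} {g : ι → ℝ} (hg : Summable g) (S : Finset ι) :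
    ∑' i, (↑S : Set ι)ᶜ.indicator (fun i => |g i|) i = ∑' i, |g i| - ∑ i ∈ S, |g i| := by
  rw [eq_sub_iff_add_eq, add_comm, sum_eq_tsum_indicator,
    ← Summable.tsum_add (hg.abs.indicator _) (hg.abs.indicator _)]
  exact tsum_congr fun i => congrFun (Set.indicator_self_add_compl _ _) i

theorem abs_tsum_indicator_sub_sum_le {ι : Type*} {g : ι → ℝ} (hg : Summable g) {M : Set ι}
    {S G : Finset ι} (hMS : M ∩ ↑S = ↑G) :
    |∑' i, M.indicator g i - ∑ i ∈ G, g i| ≤ ∑' i, |g i| - ∑ i ∈ S, |g i| := by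
  set h := (↑S : Set ι)ᶜ.indicator (M.indicator g)
  have hh : Summable h := (hg.indicator _).indicator _
  have hsplit : ∑' i, M.indicator g i = ∑ i ∈ G, g i + ∑' i, h i := by
    rw [sum_eq_tsum_indicator, ← hMS, Set.inter_comm, ← Set.indicator_indicator,
      ← Summable.tsum_add ((hg.indicator _).indicator _) hh]
    exact tsum_congr fun i => (congrFun (Set.indicator_self_add_compl _ _) i).symm
  have hle : ∀ i, |h i| ≤ (↑S : Set ι)ᶜ.indicator (fun i => |g i|) i := by
    intro i
    classical
    simp only [h, Set.indicator_apply]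
    split_ifs <;> simp
  have habs : |∑' i, h i| ≤ ∑' i, |h i| := by
    simpa only [Real.norm_eq_abs] using
      norm_tsum_le_tsum_norm (f := h) (by simpa only [Real.norm_eq_abs] using hh.abs)
  rw [hsplit, add_sub_cancel_left, ← tsum_indicator_compl_abs_eq hg]
  exact habs.trans (Summable.tsum_le_tsum hle hh.abs (hg.abs.indicator _))

theorem iUnion_inter_Ico_eq_of_subset_Ico {n : ℕ → ℕ} (hn : Monotone n) {G : ℕ → Finset ℕ}
    (hG : ∀ r, G r ⊆ Finset.Ico (n r) (n (r + 1))) (r : ℕ) :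
    (⋃ s, (↑(G s) : Set ℕ)) ∩ ↑(Finset.Ico (n r) (n (r + 1))) = ↑(G r) := by
  refine subset_antisymm ?_ fun i hi => ⟨mem_iUnion.mpr ⟨r, hi⟩, hG r hi⟩
  rintro i ⟨hi, hir⟩
  obtain ⟨s, his⟩ := mem_iUnion.mp hi
  have his' := Finset.mem_Ico.mp (hG s his)
  have hir' := Finset.mem_Ico.mp hir
  obtain rfl : s = r := by
    by_contra hsr
    rcases Nat.lt_or_gt_of_ne hsr with h | h
    · have : n (s + 1) ≤ n r := hn h; omega
    · have : n (r + 1) ≤ n s := hn h; omega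
  exact his

section GlidingHump

variable {d : ℕ → ℕ → ℝ} {δ : ℝ}

theorem exists_block_le_abs_tsum_indicator (hd : ∀ k, Summable (d k))
    (hpt : ∀ i, Tendsto (fun k => d k i) atTop (𝓝 0)) (hδ0 : 0 < δ)
    (hδ : ∀ k, δ ≤ ∑' i, |d k i|) (k n : ℕ) :
    ∃ k' > k, ∃ n' ≥ n, ∃ G ⊆ Finset.Ico n n', ∀ M : Set ℕ, M ∩ ↑(Finset.Ico n n') = ↑G →
      δ / 8 ≤ |∑' i, M.indicator (d k') i| := by
  -- Row `k'` has mass `< δ / 4` outside `[n, n')`, hence `> 3δ/4` inside, and a signed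
  -- part `G` of the block keeps half of that whatever `M` does outside the block.
  have hhead : Tendsto (fun k => ∑ i ∈ Finset.range n, |d k i|) atTop (𝓝 0) := by
    simpa using tendsto_finsetSum (Finset.range n) fun i _ => (hpt i).abs
  obtain ⟨k', hhead', hk'⟩ := ((hhead.eventually (gt_mem_nhds (by linarith : (0 : ℝ) < δ / 8))).and
    (eventually_gt_atTop k)).exists
  have htail := (hd k').abs.hasSum.tendsto_sum_nat
  obtain ⟨n', htail', hn'⟩ := ((htail.eventually
    (lt_mem_nhds (by linarith : ∑' i, |d k' i| - δ / 8 < ∑' i, |d k' i|))).and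
    (eventually_ge_atTop n)).exists
  have hblock : ∑' i, |d k' i| - ∑ i ∈ Finset.Ico n n', |d k' i| < δ / 4 := by
    rw [Finset.sum_Ico_eq_sub _ hn']
    linarith
  obtain ⟨G, hGS, hG⟩ := exists_subset_sum_abs_le_two_mul_abs_sum (Finset.Ico n n') (d k')
  refine ⟨k', hk', n', hn', G, hGS, fun M hM => ?_⟩
  have hM' := abs_tsum_indicator_sub_sum_le (hd k') hM
  have hrev := abs_sub_abs_le_abs_sub (∑ i ∈ G, d k' i) (∑' i, M.indicator (d k') i)
  rw [abs_sub_comm] at hrev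
  linarith [hδ k']

theorem exists_frequently_le_abs_tsum_indicator (hd : ∀ k, Summable (d k))
    (hpt : ∀ i, Tendsto (fun k => d k i) atTop (𝓝 0)) (hδ0 : 0 < δ)
    (hδ : ∀ k, δ ≤ ∑' i, |d k i|) :
    ∃ M : Set ℕ, ∃ᶠ k in atTop, δ / 8 ≤ |∑' i, M.indicator (d k) i| := by
  choose K hK N hN G hG hMG using exists_block_le_abs_tsum_indicator hd hpt hδ0 hδ
  let s : ℕ → ℕ × ℕ := fun r => Nat.rec (0, 0) (fun _ p => (K p.1 p.2, N p.1 p.2)) r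
  have hs : ∀ r, s (r + 1) = (K (s r).1 (s r).2, N (s r).1 (s r).2) := fun r => rfl
  have hk : StrictMono fun r => (s r).1 :=
    strictMono_nat_of_lt_succ fun r => by rw [hs]; exact hK _ _
  have hn : Monotone fun r => (s r).2 := monotone_nat_of_le_succ fun r => by rw [hs]; exact hN _ _
  refine ⟨⋃ r, ↑(G (s r).1 (s r).2), frequently_atTop.mpr fun k => ⟨(s (k + 1)).1, ?_, ?_⟩⟩
  · exact hk.le_apply.trans (hk.monotone k.le_succ)
  · rw [hs]
    exact hMG _ _ _ (iUnion_inter_Ico_eq_of_subset_Ico (G := fun r => G (s r).1 (s r).2) hn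
      (fun r => hG _ _) k)

theorem tendsto_tsum_abs_of_tendsto_tsum_indicator (hd : ∀ k, Summable (d k))
    (hM : ∀ M : Set ℕ, Tendsto (fun k => ∑' i, M.indicator (d k) i) atTop (𝓝 0)) :
    Tendsto (fun k => ∑' i, |d k i|) atTop (𝓝 0) := by
  have hpt : ∀ i, Tendsto (fun k => d k i) atTop (𝓝 0) := fun i => by
    simpa [tsum_eq_single i, Set.indicator_apply] using hM {i}
  refine tendsto_order.2 ⟨fun a ha => Eventually.of_forall fun k => ha.trans_le
    (tsum_nonneg fun i => abs_nonneg _), fun δ hδ0 => ?_⟩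
  by_contra hδ
  obtain ⟨φ, hφ, hφδ⟩ := extraction_of_frequently_atTop (not_eventually.mp hδ)
  obtain ⟨M, hfreq⟩ := exists_frequently_le_abs_tsum_indicator (fun k => hd (φ k))
    (fun i => (hpt i).comp hφ.tendsto_atTop) hδ0 fun k => not_lt.mp (hφδ k)
  have hlim := ((hM M).comp hφ.tendsto_atTop).abs
  rw [abs_zero] at hlim
  obtain ⟨k, hk, hk'⟩ := (hfreq.and_eventually
    (hlim.eventually (gt_mem_nhds (by linarith : (0 : ℝ) < δ / 8)))).exists
  exact hk'.not_ge hk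

end GlidingHump

theorem tendsto_tsum_abs_sub_of_cauchySeq_tsum_indicator {a : ℕ → ℕ → ℝ}
    (ha : ∀ j, Summable (a j)) (hM : ∀ M : Set ℕ, CauchySeq fun j => ∑' i, M.indicator (a j) i) :
    Tendsto (fun p : ℕ × ℕ => ∑' i, |a p.1 i - a p.2 i|) atTop (𝓝 0) := by
  refine tendsto_of_seq_tendsto fun x hx => tendsto_tsum_abs_of_tendsto_tsum_indicator
    (fun k => (ha (x k).1).sub (ha (x k).2)) fun M => ?_
  have hdist := (cauchySeq_iff_tendsto_dist_atTop_0.mp (hM M)).comp hx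
  refine (tendsto_zero_iff_abs_tendsto_zero _).mpr (hdist.congr fun k => ?_)
  simp only [Function.comp_apply, Real.dist_eq,
    ← Summable.tsum_sub ((ha _).indicator M) ((ha _).indicator M)]
  congr 2 with i
  exact (congrFun (Set.indicator_sub M (a (x k).1) (a (x k).2)) i).symm

theorem Submodule.mem_topologicalClosure_of_forall_dual {E : Type*} [TopologicalSpace E]
    [AddCommGroup E] [IsTopologicalAddGroup E] [Module ℝ E] [ContinuousSMul ℝ E]
    [LocallyConvexSpace ℝ E] (p : Submodule ℝ E) {x : E}
    (h : ∀ f : StrongDual ℝ E, (∀ y ∈ p, f y = 0) → f x = 0) : x ∈ p.topologicalClosure := by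
  by_contra hx
  obtain ⟨f, u, hfu, hux⟩ := geometric_hahn_banach_closed_point
    p.topologicalClosure.convex p.isClosed_topologicalClosure hx
  have hu : 0 < u := by simpa using hfu 0 (zero_mem _)
  refine hux.not_ge ((h f fun y hy => ?_).trans_le hu.le)
  by_contra hfy
  have := hfu ((u / f y) • y) (p.le_topologicalClosure (p.smul_mem _ hy))
  rw [map_smul, smul_eq_mul, div_mul_cancel₀ _ hfy] at this
  exact this.false

theorem exists_strictMono_cauchySeq_apply {X : Type*} [NormedAddCommGroup X] [NormedSpace ℝ X]
    (p : Submodule ℝ X) [TopologicalSpace.SeparableSpace p] {x' : ℕ → StrongDual ℝ X} {C : ℝ}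
    (hC : ∀ r, ‖x' r‖ ≤ C) :
    ∃ φ : ℕ → ℕ, StrictMono φ ∧ ∀ z ∈ p, CauchySeq fun k => x' (φ k) z := by
  obtain ⟨L, -, φ, hφ, hlim⟩ := WeakDual.isSeqCompact_closedBall ℝ p 0 C
    (x := fun r => StrongDual.toWeakDual ((x' r).comp p.subtypeL)) fun r => by
      simpa using ((x' r).opNorm_comp_le p.subtypeL).trans
        ((mul_le_of_le_one_right (norm_nonneg _) (Submodule.norm_subtypeL_le p)).trans (hC r))
  exact ⟨φ, hφ, fun z hz =>
    (((WeakDual.eval_continuous (⟨z, hz⟩ : p)).tendsto L).comp hlim).cauchySeq⟩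

theorem exists_norm_lt_of_forall_hasSum_dual {X : Type*} [NormedAddCommGroup X]
    [NormedSpace ℝ X] {ν : ℕ → X}
    (h : ∀ M : Set ℕ, ∃ y : X, ∀ x' : StrongDual ℝ X,
      HasSum (M.indicator fun i => x' (ν i)) (x' y))
    {ε : ℝ} (hε : 0 < ε) : ∃ r, ‖ν r‖ < ε := by
  by_contra! hν
  choose x' hx'norm hx'ν using fun r => exists_dual_vector'' ℝ (ν r)
  choose y hy using h
  set Y := (Submodule.span ℝ (range ν)).topologicalClosure
  have hyY : ∀ M, y M ∈ Y := fun M => Submodule.mem_topologicalClosure_of_forall_dual _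
    fun f hf => (hy M f).unique (by simp [hf _ (Submodule.subset_span (mem_range_self _))])
  have : TopologicalSpace.SeparableSpace Y :=
    (countable_range ν).isSeparable.span.closure.separableSpace
  obtain ⟨φ, hφ, hcauchy⟩ := exists_strictMono_cauchySeq_apply Y hx'norm
  set a : ℕ → ℕ → ℝ := fun j i => x' (φ j) (ν i)
  have hrow : ∀ j, Summable (a j) := fun j => by simpa using (hy univ (x' (φ j))).summable
  have hM : ∀ M : Set ℕ, CauchySeq fun j => ∑' i, M.indicator (a j) i := fun M => by
    simpa only [a, (hy M _).tsum_eq] using hcauchy (y M) (hyY M)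
  obtain ⟨⟨N₁, N₂⟩, hN⟩ := eventually_atTop.mp
    ((tendsto_tsum_abs_sub_of_cauchySeq_tsum_indicator hrow hM).eventually
      (gt_mem_nhds (half_pos hε)))
  set N := max N₁ N₂
  have hdiag : ∀ j ≥ N, ε / 2 < a N (φ j) := fun j hj => by
    have hdiff : |a j (φ j) - a N (φ j)| ≤ ∑' i, |a j i - a N i| :=
      ((hrow j).sub (hrow N)).abs.le_tsum (φ j) fun _ _ => abs_nonneg _
    have hsmall : ∑' i, |a j i - a N i| < ε / 2 :=
      hN (j, N) ⟨le_of_max_le_left hj, le_max_right _ _⟩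
    have hjj : a j (φ j) = ‖ν (φ j)‖ := hx'ν (φ j)
    linarith [hν (φ j), (le_abs_self _).trans hdiff]
  obtain ⟨j, hj, hjN⟩ := (((hrow N).tendsto_atTop_zero.comp hφ.tendsto_atTop).eventually
    (gt_mem_nhds (half_pos hε))).and (eventually_ge_atTop N) |>.exists
  exact (hdiag j hjN).not_gt hj

theorem exists_pairwise_disjoint_le_norm_sum_of_not_summable {ι E : Type*}
    [NormedAddCommGroup E] [CompleteSpace E] {g : ι → E} (hg : ¬Summable g) :
    ∃ ε > 0, ∃ t : ℕ → Finset ι, Pairwise (Function.onFun Disjoint t) ∧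
      ∀ r, ε ≤ ‖∑ i ∈ t r, g i‖ := by
  classical
  simp only [summable_iff_vanishing_norm, not_forall, not_exists, not_lt] at hg
  obtain ⟨ε, hε, H⟩ := hg
  choose T hTdisj hT using H
  let U : ℕ → Finset ι := fun r => Nat.rec ∅ (fun _ U => U ∪ T U) r
  have hU : Monotone U := monotone_nat_of_le_succ fun r => Finset.subset_union_left
  refine ⟨ε, hε, fun r => T (U r), (pairwise_disjoint_on _).mpr fun k l hkl => ?_, fun r => hT _⟩
  exact (hTdisj (U l)).symm.mono_left
    (Finset.subset_union_right.trans (hU (Nat.succ_le_of_lt hkl)))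

section SetFunction

variable {T : Type*} [MeasurableSpace T]

theorem map_biUnion_finset_of_additive {X : Type*} [AddCommMonoid X] {μ : Set T → X}
    (hempty : μ ∅ = 0)
    (hadd : ∀ A B : Set T, MeasurableSet A → MeasurableSet B → Disjoint A B →
      μ (A ∪ B) = μ A + μ B)
    {f : ℕ → Set T} (hf : ∀ n, MeasurableSet (f n)) (hfd : Pairwise (Function.onFun Disjoint f))
    (t : Finset ℕ) : μ (⋃ n ∈ t, f n) = ∑ n ∈ t, μ (f n) := by
  classical
  induction t using Finset.induction_on with
  | empty => simpa using hempty
  | insert a s ha ih =>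
    rw [Finset.set_biUnion_insert, hadd _ _ (hf a) (s.measurableSet_biUnion fun n _ => hf n)
      (disjoint_iUnion₂_right.mpr fun n hn => hfd fun h => ha (h ▸ hn)), ih, Finset.sum_insert ha]

theorem hasSum_indicator_of_hasSum_iUnion {E : Type*} [AddCommMonoid E] [TopologicalSpace E]
    {m : Set T → E} (hempty : m ∅ = 0)
    (h : ∀ f : ℕ → Set T, (∀ n, MeasurableSet (f n)) → Pairwise (Function.onFun Disjoint f) →
      HasSum (fun n => m (f n)) (m (⋃ n, f n)))
    {B : ℕ → Set T} (hB : ∀ n, MeasurableSet (B n)) (hBd : Pairwise (Function.onFun Disjoint B))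
    (M : Set ℕ) : HasSum (M.indicator fun i => m (B i)) (m (⋃ i ∈ M, B i)) := by
  classical
  let g : ℕ → Set T := fun i => if i ∈ M then B i else ∅
  have hg : ∀ i, MeasurableSet (g i) := fun i => by
    by_cases hi : i ∈ M <;> simp [g, hi, hB i]
  have hgd : Pairwise (Function.onFun Disjoint g) := fun i j hij => by
    by_cases hi : i ∈ M <;> by_cases hj : j ∈ M <;> simp [Function.onFun, g, hi, hj, hBd hij]
  have hgU : (⋃ i, g i) = ⋃ i ∈ M, B i := by
    ext x
    simp only [g, mem_iUnion]
    exact ⟨fun ⟨i, hi⟩ => by split_ifs at hi with hiM; exacts [⟨i, hiM, hi⟩, hi.elim],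
      fun ⟨i, hiM, hi⟩ => ⟨i, by simpa [hiM] using hi⟩⟩
  convert hgU ▸ h g hg hgd using 1
  ext i
  by_cases hi : i ∈ M <;> simp [g, hi, hempty]

theorem summable_of_forall_hasSum_dual {X : Type*} [NormedAddCommGroup X] [NormedSpace ℝ X]
    [CompleteSpace X] {μ : Set T → X} (hempty : μ ∅ = 0)
    (hadd : ∀ A B : Set T, MeasurableSet A → MeasurableSet B → Disjoint A B →
      μ (A ∪ B) = μ A + μ B)
    (h : ∀ x' : StrongDual ℝ X, ∀ f : ℕ → Set T, (∀ n, MeasurableSet (f n)) →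
      Pairwise (Function.onFun Disjoint f) → HasSum (fun n => x' (μ (f n))) (x' (μ (⋃ n, f n))))
    {f : ℕ → Set T} (hf : ∀ n, MeasurableSet (f n)) (hfd : Pairwise (Function.onFun Disjoint f)) :
    Summable fun n => μ (f n) := by
  by_contra hns
  obtain ⟨ε, hε, t, ht, hεt⟩ := exists_pairwise_disjoint_le_norm_sum_of_not_summable hns
  set B : ℕ → Set T := fun r => ⋃ n ∈ t r, f n
  have hB : ∀ r, MeasurableSet (B r) := fun r => (t r).measurableSet_biUnion fun n _ => hf n
  have hBd : Pairwise (Function.onFun Disjoint B) := fun k l hkl =>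
    disjoint_iUnion₂_left.mpr fun n hn => disjoint_iUnion₂_right.mpr fun m hm =>
      hfd fun hnm => Finset.disjoint_left.mp (ht hkl) hn (hnm ▸ hm)
  obtain ⟨r, hr⟩ := exists_norm_lt_of_forall_hasSum_dual (ν := fun r => μ (B r))
    (fun M => ⟨μ (⋃ i ∈ M, B i), fun x' =>
      hasSum_indicator_of_hasSum_iUnion (m := fun A => x' (μ A)) (by simp [hempty]) (h x') hB
        hBd M⟩) hε
  rw [map_biUnion_finset_of_additive hempty hadd hf hfd] at hr
  exact (hεt r).not_gt hr

end SetFunction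

/-- Orlicz–Pettis for measures: a finitely additive set function into a
Banach space is countably additive iff each scalarization `x' ∘ μ` is countably additive. -/
theorem stmt_3 {T X : Type*} [MeasurableSpace T]
    [NormedAddCommGroup X] [NormedSpace ℝ X] [CompleteSpace X]
    (μ : Set T → X) (hempty : μ ∅ = 0)
    (hadd : ∀ A B : Set T, MeasurableSet A → MeasurableSet B → Disjoint A B →
      μ (A ∪ B) = μ A + μ B) :
    (∀ f : ℕ → Set T, (∀ n, MeasurableSet (f n)) → Pairwise (Function.onFun Disjoint f) →
        HasSum (fun n => μ (f n)) (μ (⋃ n, f n)))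
      ↔ (∀ x' : X →L[ℝ] ℝ, ∀ f : ℕ → Set T, (∀ n, MeasurableSet (f n)) →
          Pairwise (Function.onFun Disjoint f) →
          HasSum (fun n => x' (μ (f n))) (x' (μ (⋃ n, f n)))) := by
  refine ⟨fun hca x' f hf hfd => x'.hasSum (hca f hf hfd), fun h f hf hfd => ?_⟩
  obtain ⟨s, hs⟩ := summable_of_forall_hasSum_dual hempty hadd h hf hfd
  have hsum : μ (⋃ n, f n) = s := SeparatingDual.eq_iff_forall_dual_eq.mpr fun x' =>
    (h x' f hf hfd).unique (x'.hasSum hs)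
  exact hsum ▸ hs
end

section
/- Let μ : Σ → X be a separable countably additive vector measure, (B_k) a μ-dense family in Σ, and (η_k) strictly positive reals with ∑ η_k = 1. For 1 ≤ p < ∞, if f ∈ L¹[μ] satisfies sup_{x'∈X', ‖x'‖≤1} (∑_k η_k |∫_T χ_{B_k} f d|x'μ||^p)^{1/p} = 0, then f = 0 μ-almost everywhere; hence f ↦ ‖f‖_{KS^p[μ]} is a norm on L¹[μ]. -/
/-!
Fix `x'` in the dual unit ball and put `ν = |x'μ|`. If `‖f‖_{KS^p[μ]} = 0`, every term of the
defining series vanishes, so `∫_{B_k} f dν = 0` for all `k`. Since `ν ≤ ‖μ‖`, the family `(B_k)` is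
dense for `ν` as well, and absolute continuity of `A ↦ ∫_A |f| dν` transfers the vanishing to
all `∫_A f dν`; hence `f = 0` `ν`-a.e. Thus `|x'μ|(A) = 0` for every measurable `A ⊆ {f ≠ 0}`
and every such `x'`, and Hahn–Banach gives `μ(A) = 0`.
-/

open MeasureTheory ENNReal

variable {T X : Type*} [MeasurableSpace T] [NormedAddCommGroup X] [NormedSpace ℝ X]

/-- The scalar signed measure `x' ∘ μ` associated with a vector measure `μ`. -/
noncomputable def scalarMeas (μ : VectorMeasure T X) (x' : X →L[ℝ] ℝ) : SignedMeasure T :=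
  μ.mapRange x'.toLinearMap.toAddMonoidHom x'.continuous

/-- The variation measure `|x'μ|`. -/
noncomputable def scalarVar (μ : VectorMeasure T X) (x' : X →L[ℝ] ℝ) : Measure T :=
  (scalarMeas μ x').totalVariation

/-- The integral of a real function with respect to a signed measure. -/
noncomputable def signedIntegral (s : SignedMeasure T) (f : T → ℝ) : ℝ :=
  ∫ t, f t ∂s.toJordanDecomposition.posPart - ∫ t, f t ∂s.toJordanDecomposition.negPart

/-- Kluvánek–Lewis `μ`-integrability. -/
def KLIntegrable (μ : VectorMeasure T X) (f : T → ℝ) : Prop :=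
  (∀ x' : X →L[ℝ] ℝ, Integrable f (scalarVar μ x')) ∧
  ∀ A : Set T, MeasurableSet A → ∃ xA : X, ∀ x' : X →L[ℝ] ℝ,
    x' xA = signedIntegral (scalarMeas μ x') (A.indicator f)

/-- The semivariation `‖μ‖(A) = sup_{‖x'‖ ≤ 1} |x'μ|(A)`. -/
noncomputable def semivar (μ : VectorMeasure T X) (A : Set T) : ℝ≥0∞ :=
  ⨆ x' : {y : X →L[ℝ] ℝ // ‖y‖ ≤ 1}, scalarVar μ x'.1 A

/-- `(B k)` is a `μ`-dense family witnessing the separability of `μ`. -/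
def MuDense (μ : VectorMeasure T X) (B : ℕ → Set T) : Prop :=
  (∀ k, MeasurableSet (B k)) ∧
  ∀ A : Set T, MeasurableSet A → ∀ ε : ℝ, 0 < ε →
    ∃ k, semivar μ (symmDiff A (B k)) ≤ ENNReal.ofReal ε

/-- The Kuelbs–Steadman norm `‖f‖_{KS^p[μ]}` (`1 ≤ p < ∞`). -/
noncomputable def ksNorm (μ : VectorMeasure T X) (B : ℕ → Set T) (η : ℕ → ℝ) (p : ℝ)
    (f : T → ℝ) : ℝ≥0∞ :=
  ⨆ x' : {y : X →L[ℝ] ℝ // ‖y‖ ≤ 1},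
    (∑' k, ENNReal.ofReal (η k * |∫ t, (B k).indicator f t ∂scalarVar μ x'.1| ^ p)) ^ (1 / p)

/-- The Kuelbs–Steadman norm `‖f‖_{KS^∞[μ]}`. -/
noncomputable def ksInfNorm (μ : VectorMeasure T X) (B : ℕ → Set T) (f : T → ℝ) : ℝ≥0∞ :=
  ⨆ x' : {y : X →L[ℝ] ℝ // ‖y‖ ≤ 1},
    ⨆ k : ℕ, ENNReal.ofReal |∫ t, (B k).indicator f t ∂scalarVar μ x'.1|

namespace MeasureTheory

variable {α E ι : Type*} [MeasurableSpace α] [NormedAddCommGroup E]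
  {ν : Measure α} {f : α → E}

theorem norm_setIntegral_sub_setIntegral_le [NormedSpace ℝ E] (hf : Integrable f ν)
    {s t : Set α} (hs : MeasurableSet s) (ht : MeasurableSet t) :
    ‖∫ x in s, f x ∂ν - ∫ x in t, f x ∂ν‖ ≤ ∫ x in symmDiff s t, ‖f x‖ ∂ν := by
  rw [← integral_indicator hs, ← integral_indicator ht, ← integral_indicator (hs.symmDiff ht),
    ← integral_sub (hf.indicator hs) (hf.indicator ht)]
  refine (norm_integral_le_integral_norm _).trans <| integral_mono
    ((hf.indicator hs).sub (hf.indicator ht)).norm (hf.norm.indicator (hs.symmDiff ht)) fun x => ?_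
  by_cases hxs : x ∈ s <;> by_cases hxt : x ∈ t <;>
    simp [hxs, hxt, Set.mem_symmDiff]

theorem Integrable.exists_pos_forall_setIntegral_norm_lt (hf : Integrable f ν) {ε : ℝ}
    (hε : 0 < ε) : ∃ δ > 0, ∀ s, ν s < δ → ∫ x in s, ‖f x‖ ∂ν < ε := by
  obtain ⟨δ, hδ, hsmall⟩ :=
    exists_pos_setLIntegral_lt_of_measure_lt hf.2.ne (ENNReal.ofReal_pos.mpr hε).ne'
  refine ⟨δ, hδ, fun s hs => ?_⟩
  rw [integral_norm_eq_lintegral_enorm hf.aestronglyMeasurable.restrict]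
  exact ENNReal.toReal_lt_of_lt_ofReal (hsmall s hs)

theorem Integrable.ae_eq_zero_of_setIntegral_eq_zero_of_dense [NormedSpace ℝ E] [CompleteSpace E]
    (hf : Integrable f ν) {B : ι → Set α} (hBm : ∀ k, MeasurableSet (B k))
    (hdense : ∀ s, MeasurableSet s → ∀ ε : ℝ, 0 < ε →
      ∃ k, ν (symmDiff s (B k)) ≤ ENNReal.ofReal ε)
    (hB : ∀ k, ∫ x in B k, f x ∂ν = 0) : f =ᵐ[ν] 0 := by
  refine hf.ae_eq_zero_of_forall_setIntegral_eq_zero fun s hs _ =>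
    norm_le_zero_iff.mp <| le_of_forall_pos_lt_add fun ε hε => ?_
  obtain ⟨δ, hδ, hsmall⟩ := hf.exists_pos_forall_setIntegral_norm_lt hε
  obtain ⟨r, -, hr, hrδ⟩ := ENNReal.lt_iff_exists_real_btwn.mp hδ
  obtain ⟨k, hk⟩ := hdense s hs r (ENNReal.ofReal_pos.mp hr)
  calc ‖∫ x in s, f x ∂ν‖ = ‖∫ x in s, f x ∂ν - ∫ x in B k, f x ∂ν‖ := by rw [hB k, sub_zero]
    _ ≤ ∫ x in symmDiff s (B k), ‖f x‖ ∂ν := norm_setIntegral_sub_setIntegral_le hf hs (hBm k)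
    _ < 0 + ε := by rw [zero_add]; exact hsmall _ (hk.trans_lt hrδ)

end MeasureTheory

theorem scalarVar_le_semivar (μ : VectorMeasure T X) {x' : X →L[ℝ] ℝ} (hx' : ‖x'‖ ≤ 1)
    (A : Set T) : scalarVar μ x' A ≤ semivar μ A :=
  le_iSup (fun y : {y : X →L[ℝ] ℝ // ‖y‖ ≤ 1} => scalarVar μ y.1 A) ⟨x', hx'⟩

theorem MuDense.exists_scalarVar_symmDiff_le {μ : VectorMeasure T X} {B : ℕ → Set T}
    (hB : MuDense μ B) {x' : X →L[ℝ] ℝ} (hx' : ‖x'‖ ≤ 1) {A : Set T} (hA : MeasurableSet A)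
    {ε : ℝ} (hε : 0 < ε) : ∃ k, scalarVar μ x' (symmDiff A (B k)) ≤ ENNReal.ofReal ε :=
  (hB.2 A hA ε hε).imp fun _ hk => (scalarVar_le_semivar μ hx' _).trans hk

theorem integral_indicator_eq_zero_of_ksNorm_eq_zero {μ : VectorMeasure T X} {B : ℕ → Set T}
    {η : ℕ → ℝ} {p : ℝ} {f : T → ℝ} (hη : ∀ k, 0 < η k) (hp : 0 < p)
    (h0 : ksNorm μ B η p f = 0) {x' : X →L[ℝ] ℝ} (hx' : ‖x'‖ ≤ 1) (k : ℕ) :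
    ∫ t, (B k).indicator f t ∂scalarVar μ x' = 0 := by
  have hroot : (∑' k, ENNReal.ofReal
      (η k * |∫ t, (B k).indicator f t ∂scalarVar μ x'| ^ p)) ^ (1 / p) = 0 :=
    nonpos_iff_eq_zero.mp <| h0 ▸ le_iSup (fun y : {y : X →L[ℝ] ℝ // ‖y‖ ≤ 1} =>
      (∑' k, ENNReal.ofReal
        (η k * |∫ t, (B k).indicator f t ∂scalarVar μ y.1| ^ p)) ^ (1 / p)) ⟨x', hx'⟩
  have hterm := ENNReal.tsum_eq_zero.mp
    ((ENNReal.rpow_eq_zero_iff_of_pos (one_div_pos.mpr hp)).mp hroot) k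
  rw [ENNReal.ofReal_eq_zero] at hterm
  have hpow : |∫ t, (B k).indicator f t ∂scalarVar μ x'| ^ p = 0 :=
    le_antisymm (nonpos_of_mul_nonpos_right hterm (hη k)) (by positivity)
  exact abs_eq_zero.mp ((Real.rpow_eq_zero (abs_nonneg _) hp.ne').mp hpow)

theorem eq_zero_of_forall_scalarVar_eq_zero {μ : VectorMeasure T X} {A : Set T}
    (h : ∀ x' : X →L[ℝ] ℝ, ‖x'‖ ≤ 1 → scalarVar μ x' A = 0) : μ A = 0 := by
  by_contra hne
  obtain ⟨g, hg, hgA⟩ := exists_dual_vector ℝ (μ A) (norm_ne_zero_iff.mpr hne)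
  have hgzero : g (μ A) = 0 := SignedMeasure.null_of_totalVariation_zero _ (h g hg.le)
  exact hne (norm_eq_zero.mp (hgA.symm.trans hgzero))

theorem stmt_8_general (μ : VectorMeasure T X) (B : ℕ → Set T) (hB : MuDense μ B)
    (η : ℕ → ℝ) (hη : ∀ k, 0 < η k)
    (p : ℝ) (hp : 1 ≤ p) (f : T → ℝ) (hf : KLIntegrable μ f)
    (h0 : ksNorm μ B η p f = 0) :
    ∀ A : Set T, MeasurableSet A → A ⊆ {t | f t ≠ 0} → μ A = 0 := by
  intro A _ hsub
  refine eq_zero_of_forall_scalarVar_eq_zero fun x' hx' => ?_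
  have hBk : ∀ k, ∫ t in B k, f t ∂scalarVar μ x' = 0 := fun k => by
    rw [← integral_indicator (hB.1 k)]
    exact integral_indicator_eq_zero_of_ksNorm_eq_zero hη (one_pos.trans_le hp) h0 hx' k
  have hf0 : f =ᵐ[scalarVar μ x'] 0 := (hf.1 x').ae_eq_zero_of_setIntegral_eq_zero_of_dense hB.1
    (fun _ hS _ hε => hB.exists_scalarVar_symmDiff_le hx' hS hε) hBk
  exact measure_mono_null hsub (ae_iff.mp hf0)

/-- if `‖f‖_{KS^p[μ]} = 0` for some `1 ≤ p < ∞` and `f ∈ L¹[μ]`, then `f = 0`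
`μ`-almost everywhere (`μ` vanishes on every measurable subset of `{f ≠ 0}`); hence
`‖·‖_{KS^p[μ]}` is a norm on `L¹[μ]`. -/
theorem stmt_8 (μ : VectorMeasure T X) (B : ℕ → Set T) (hB : MuDense μ B)
    (η : ℕ → ℝ) (hη : ∀ k, 0 < η k) (hηsum : ∑' k, η k = 1)
    (p : ℝ) (hp : 1 ≤ p) (f : T → ℝ) (hmeas : Measurable f) (hf : KLIntegrable μ f)
    (h0 : ksNorm μ B η p f = 0) :
    ∀ A : Set T, MeasurableSet A → A ⊆ {t | f t ≠ 0} → μ A = 0 :=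
  stmt_8_general μ B hB η hη p hp f hf h0
end

section
/- Let μ : Σ → X be a separable countably additive vector measure, (B_k) a μ-dense family with ‖μ‖(B_k) ≤ M := ‖μ‖(T) + 1 for all k, and (η_k) positive reals summing to 1. For all 1 ≤ q < ∞ and 1 ≤ p < ∞ and all f ∈ L^q[μ], ‖f‖_{KS^p[μ]} ≤ M ‖f‖_{L^q[μ]}; hence the inclusion L^q[μ] ⊂ KS^p[μ] is continuous. -/
/-! By Hölder's inequality for the finite measure `|x'μ|`,
`|∫_{B_k} f d|x'μ|| ≤ ‖f‖_{L^q(|x'μ|)} · |x'μ|(B_k)^{1 - 1/q}`, and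
`|x'μ|(B_k) ≤ ‖μ‖(B_k) ≤ M` with `M ≥ 1`, so every term is at most `M ‖f‖_{L^q[μ]}`.
The `KS^p` expression is an `η`-weighted `p`-th power mean of these terms, hence obeys the
same bound. -/

open MeasureTheory ENNReal

variable {T X : Type*} [MeasurableSpace T] [NormedAddCommGroup X] [NormedSpace ℝ X]

/-- The `L^q[μ]` norm, `1 ≤ q < ∞`. -/
noncomputable def lqNorm (μ : VectorMeasure T X) (q : ℝ) (f : T → ℝ) : ℝ≥0∞ :=
  ⨆ x' : {y : X →L[ℝ] ℝ // ‖y‖ ≤ 1},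
    ENNReal.ofReal ((∫ t, |f t| ^ q ∂scalarVar μ x'.1) ^ (1 / q))

theorem rpow_tsum_ofReal_mul_rpow_le {ι : Type*} {η a : ι → ℝ} {C : ℝ≥0∞} {p : ℝ} (hp : 0 < p)
    (hη : ∀ k, 0 ≤ η k) (hηsum : ∑' k, η k = 1) (ha : ∀ k, ENNReal.ofReal |a k| ≤ C) :
    (∑' k, ENNReal.ofReal (η k * |a k| ^ p)) ^ (1 / p) ≤ C := by
  have hsummable : Summable η := by
    by_contra h
    simp [tsum_eq_zero_of_not_summable h] at hηsum
  have hw : ∑' k, ENNReal.ofReal (η k) = 1 := by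
    rw [← ENNReal.ofReal_tsum_of_nonneg hη hsummable, hηsum, ENNReal.ofReal_one]
  calc (∑' k, ENNReal.ofReal (η k * |a k| ^ p)) ^ (1 / p)
      ≤ (∑' k, ENNReal.ofReal (η k) * C ^ p) ^ (1 / p) := by
        gcongr with k
        rw [ENNReal.ofReal_mul (hη k), ← ENNReal.ofReal_rpow_of_nonneg (abs_nonneg _) hp.le]
        gcongr
        exact ha k
    _ = C := by
        rw [ENNReal.tsum_mul_right, hw, one_mul, ← ENNReal.rpow_mul,
          mul_one_div_cancel hp.ne', ENNReal.rpow_one]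

theorem rpow_le_of_le_of_one_le {x M : ℝ≥0∞} {r : ℝ} (hx : x ≤ M) (hM : 1 ≤ M)
    (hr₀ : 0 ≤ r) (hr₁ : r ≤ 1) : x ^ r ≤ M :=
  calc x ^ r ≤ M ^ r := ENNReal.rpow_le_rpow hx hr₀
    _ ≤ M ^ (1 : ℝ) := ENNReal.rpow_le_rpow_of_exponent_le hM hr₁
    _ = M := ENNReal.rpow_one M

section Holder

variable {α E : Type*} [MeasurableSpace α] [NormedAddCommGroup E] [NormedSpace ℝ E]
  {ν : Measure α}

theorem enorm_integral_indicator_le {s : Set α} {f : α → E} {q : ℝ} (hs : MeasurableSet s)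
    (hf : AEStronglyMeasurable f ν) (hq : 1 ≤ q) :
    ‖∫ t, s.indicator f t ∂ν‖ₑ ≤ eLpNorm f (ENNReal.ofReal q) ν * ν s ^ (1 - 1 / q) := by
  have hq₀ : 0 < q := zero_lt_one.trans_le hq
  calc ‖∫ t, s.indicator f t ∂ν‖ₑ
      ≤ eLpNorm (s.indicator f) 1 ν := by
        rw [eLpNorm_one_eq_lintegral_enorm]; exact enorm_integral_le_lintegral_enorm _
    _ = eLpNorm f 1 (ν.restrict s) := eLpNorm_indicator_eq_eLpNorm_restrict hs
    _ ≤ eLpNorm f (ENNReal.ofReal q) (ν.restrict s) * ν.restrict s Set.univ ^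
          (1 / (1 : ℝ≥0∞).toReal - 1 / (ENNReal.ofReal q).toReal) :=
        eLpNorm_le_eLpNorm_mul_rpow_measure_univ (ENNReal.one_le_ofReal.mpr hq) hf.restrict
    _ ≤ eLpNorm f (ENNReal.ofReal q) ν * ν s ^ (1 - 1 / q) := by
        rw [Measure.restrict_apply_univ, ENNReal.toReal_ofReal hq₀.le, ENNReal.toReal_one,
          div_one]
        gcongr
        exact Measure.restrict_le_self

theorem eLpNorm_ofReal_eq_ofReal_integral_abs_rpow {f : α → ℝ} {q : ℝ}
    (hf : AEStronglyMeasurable f ν) (hq : 0 < q) (hint : Integrable (fun t => |f t| ^ q) ν) :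
    eLpNorm f (ENNReal.ofReal q) ν = ENNReal.ofReal ((∫ t, |f t| ^ q ∂ν) ^ (1 / q)) := by
  have hq' : ENNReal.ofReal q ≠ 0 := by simpa using hq
  have hmem : MemLp f (ENNReal.ofReal q) ν := by
    rw [← integrable_norm_rpow_iff hf hq' ENNReal.ofReal_ne_top, ENNReal.toReal_ofReal hq.le]
    exact hint
  rw [hmem.eLpNorm_eq_integral_rpow_norm hq' ENNReal.ofReal_ne_top, ENNReal.toReal_ofReal hq.le,
    one_div]
  simp only [Real.norm_eq_abs]

theorem ofReal_abs_integral_indicator_le {s : Set α} {f : α → ℝ} {q : ℝ} {M : ℝ≥0∞}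
    (hs : MeasurableSet s) (hf : AEStronglyMeasurable f ν) (hq : 1 ≤ q)
    (hint : Integrable (fun t => |f t| ^ q) ν) (hνs : ν s ≤ M) (hM : 1 ≤ M) :
    ENNReal.ofReal |∫ t, s.indicator f t ∂ν| ≤
      M * ENNReal.ofReal ((∫ t, |f t| ^ q ∂ν) ^ (1 / q)) := by
  have hq₀ : 0 < q := zero_lt_one.trans_le hq
  rw [← Real.enorm_eq_ofReal_abs, ← eLpNorm_ofReal_eq_ofReal_integral_abs_rpow hf hq₀ hint,
    mul_comm]
  calc ‖∫ t, s.indicator f t ∂ν‖ₑ ≤ eLpNorm f (ENNReal.ofReal q) ν * ν s ^ (1 - 1 / q) :=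
        enorm_integral_indicator_le hs hf hq
    _ ≤ eLpNorm f (ENNReal.ofReal q) ν * M := by
        gcongr
        exact rpow_le_of_le_of_one_le hνs hM (sub_nonneg.mpr ((div_le_one hq₀).mpr hq))
          (sub_le_self 1 (by positivity))

end Holder

instance (μ : VectorMeasure T X) (x' : X →L[ℝ] ℝ) : IsFiniteMeasure (scalarVar μ x') := by
  unfold scalarVar SignedMeasure.totalVariation; infer_instance

theorem ofReal_integral_rpow_le_lqNorm (μ : VectorMeasure T X) {x' : X →L[ℝ] ℝ} (hx' : ‖x'‖ ≤ 1)
    (q : ℝ) (f : T → ℝ) :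
    ENNReal.ofReal ((∫ t, |f t| ^ q ∂scalarVar μ x') ^ (1 / q)) ≤ lqNorm μ q f :=
  le_iSup (fun y : {y : X →L[ℝ] ℝ // ‖y‖ ≤ 1} =>
    ENNReal.ofReal ((∫ t, |f t| ^ q ∂scalarVar μ y.1) ^ (1 / q))) ⟨x', hx'⟩

theorem stmt_9_general (μ : VectorMeasure T X) (B : ℕ → Set T) (hB : MuDense μ B)
    (η : ℕ → ℝ) (hη : ∀ k, 0 < η k) (hηsum : ∑' k, η k = 1)
    (M : ℝ) (hM : ENNReal.ofReal M = semivar μ Set.univ + 1)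
    (hMk : ∀ k, semivar μ (B k) ≤ ENNReal.ofReal M)
    (p q : ℝ) (hp : 1 ≤ p) (hq : 1 ≤ q)
    (f : T → ℝ) (hmeas : Measurable f)
    (hfq : KLIntegrable μ fun t => |f t| ^ q) :
    ksNorm μ B η p f ≤ ENNReal.ofReal M * lqNorm μ q f := by
  have hM₁ : 1 ≤ ENNReal.ofReal M := hM ▸ le_add_self
  refine iSup_le fun ⟨x', hx'⟩ => ?_
  refine rpow_tsum_ofReal_mul_rpow_le (by linarith) (fun k => (hη k).le) hηsum fun k => ?_
  calc ENNReal.ofReal |∫ t, (B k).indicator f t ∂scalarVar μ x'|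
      ≤ ENNReal.ofReal M * ENNReal.ofReal ((∫ t, |f t| ^ q ∂scalarVar μ x') ^ (1 / q)) :=
        ofReal_abs_integral_indicator_le (hB.1 k) hmeas.aestronglyMeasurable hq (hfq.1 x')
          ((scalarVar_le_semivar μ hx' _).trans (hMk k)) hM₁
    _ ≤ ENNReal.ofReal M * lqNorm μ q f :=
        mul_le_mul_right (ofReal_integral_rpow_le_lqNorm μ hx' q f) _

/-- if `‖μ‖(B k) ≤ M = ‖μ‖(T) + 1` for all `k`, then for all `1 ≤ p, q < ∞`
and `f ∈ L^q[μ]`, `‖f‖_{KS^p[μ]} ≤ M ‖f‖_{L^q[μ]}`; hence `L^q[μ] ⊆ KS^p[μ]`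
continuously. -/
theorem stmt_9 (μ : VectorMeasure T X) (B : ℕ → Set T) (hB : MuDense μ B)
    (η : ℕ → ℝ) (hη : ∀ k, 0 < η k) (hηsum : ∑' k, η k = 1)
    (M : ℝ) (hM : ENNReal.ofReal M = semivar μ Set.univ + 1)
    (hMk : ∀ k, semivar μ (B k) ≤ ENNReal.ofReal M)
    (p q : ℝ) (hp : 1 ≤ p) (hq : 1 ≤ q)
    (f : T → ℝ) (hmeas : Measurable f) (hf : KLIntegrable μ f)
    (hfq : KLIntegrable μ fun t => |f t| ^ q) :
    ksNorm μ B η p f ≤ ENNReal.ofReal M * lqNorm μ q f :=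
  stmt_9_general μ B hB η hη hηsum M hM hMk p q hp hq f hmeas hfq
end
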